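/- Let G₁ be a simple graph on a finite vertex set V with |V| = n, let e* be an unordered pair of distinct vertices of V that is not an edge of G₁, and let G₂ be the graph whose edge set is the edge set of G₁ together with e*. Let π be an injective ranking assigning distinct real values to all unordered pairs of distinct vertices of V, and for i = 1, 2 let Sᵢ ⊆ V be the set of vertices matched by the greedy matching M_π(Gᵢ). Then for every positive integer s ≤ n there exists a bijection f : V → V such that for every subset T ⊆ V with |T| = s, | (n/(2s))·|T ∩ S₁| − (n/(2s))·|f(T) ∩ S₂| | ≤ n/s. Consequently, if s ≥ 16·24·(ln n)/ρ² for some ρ > 0, this bound is at most n·ρ²/(16·24·ln n). -/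

import Mathlib

/-- `M` is the greedy matching of the graph `G` with respect to the ranking `π`:
an edge `e` of `G` belongs to `M` iff no edge `e'` of `G` sharing an endpoint with `e`
and of strictly smaller rank belongs to `M`. -/
def IsGreedyMatching {V : Type*} (G : SimpleGraph V) (π : Sym2 V → ℝ)
    (M : Set (Sym2 V)) : Prop :=
  ∀ e : Sym2 V, e ∈ M ↔ e ∈ G.edgeSet ∧
    ∀ e' ∈ G.edgeSet, (∃ v, v ∈ e ∧ v ∈ e') → π e' < π e → e' ∉ M

/-! Take `f` to be the identity; it then suffices that `S₁` and `S₂` differ in at most two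
vertices. Add the edges one at a time in increasing rank and compare the vertices covered by the
two matchings so far. An edge taken by both matchings, or by neither, changes nothing. An edge
taken by exactly one matching but present in both graphs is blocked in the other one by an
earlier edge at one of its endpoints `v`: `v` leaves the symmetric difference and at most the
other endpoint enters it. When the new edge `s(a, b)` is reached the symmetric difference is
still empty, since below its rank the two greedy matchings coincide, and the edge adds at most its
two endpoints. -/

lemma Sym2.ncard_coe_le_two {α : Type*} (e : Sym2 α) : (e : Set α).ncard ≤ 2 := by
  induction e using Sym2.ind with
  | _ u w => simpa using (Set.ncard_insert_le u {w}).trans (by simp)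

open scoped symmDiff

namespace Set

variable {α : Type*} [Finite α] {A B P : Set α}

lemma ncard_union_symmDiff_le_of_mem {x : α} (hP : P.ncard ≤ 2) (hxP : x ∈ P) (hxA : x ∉ A)
    (hxB : x ∈ B) : ((P ∪ A) ∆ B).ncard ≤ (A ∆ B).ncard := by
  have hsub : (P ∪ A) ∆ B ⊆ (P \ {x}) ∪ ((A ∆ B) \ {x}) := by
    intro v hv
    by_cases hvx : v = x
    · subst hvx; simp_all [mem_symmDiff]
    · simp only [mem_union, mem_sdiff, mem_singleton_iff, hvx, not_false_eq_true, and_true]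
      rw [mem_symmDiff, mem_union] at hv
      rw [mem_symmDiff]
      tauto
  have hxAB : x ∈ A ∆ B := Or.inr ⟨hxB, hxA⟩
  calc ((P ∪ A) ∆ B).ncard ≤ ((P \ {x}) ∪ ((A ∆ B) \ {x})).ncard := ncard_le_ncard hsub
    _ ≤ (P \ {x}).ncard + ((A ∆ B) \ {x}).ncard := ncard_union_le _ _
    _ ≤ (A ∆ B).ncard := by
      rw [ncard_sdiff_singleton_of_mem hxP, ncard_sdiff_singleton_of_mem hxAB]
      have := (ncard_pos (s := A ∆ B)).2 ⟨x, hxAB⟩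
      omega

end Set

theorem Finset.card_inter_le_card_inter_add_card_symmDiff {α : Type*} [DecidableEq α]
    (T A B : Finset α) : (T ∩ A).card ≤ (T ∩ B).card + (A ∆ B).card := by
  refine (card_le_card fun v hv => ?_).trans (card_union_le _ _)
  grind [mem_symmDiff]

namespace IsGreedyMatching

variable {V : Type*} {G G₁ G₂ : SimpleGraph V} {π : Sym2 V → ℝ} {M M₁ M₂ : Set (Sym2 V)}

lemma subset_edgeSet (hM : IsGreedyMatching G π M) : M ⊆ G.edgeSet :=
  fun e he => ((hM e).1 he).1

lemma notMem_of_lt (hM : IsGreedyMatching G π M) {e d : Sym2 V} {v : V} (he : e ∈ M)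
    (hve : v ∈ e) (hvd : v ∈ d) (hlt : π d < π e) : d ∉ M :=
  fun hd => ((hM e).1 he).2 d (hM.subset_edgeSet hd) ⟨v, hve, hvd⟩ hlt hd

lemma exists_lt_of_notMem (hM : IsGreedyMatching G π M) {e : Sym2 V} (he : e ∈ G.edgeSet)
    (heM : e ∉ M) : ∃ d ∈ M, π d < π e ∧ ∃ v ∈ e, v ∈ d := by
  by_contra! h
  exact heM ((hM e).2 ⟨he, fun d _ ⟨v, hve, hvd⟩ hlt hd => h d hd hlt v hve hvd⟩)

variable [Finite V]

lemma mem_iff_mem_of_lt (hM₁ : IsGreedyMatching G₁ π M₁)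
    (hM₂ : IsGreedyMatching G₂ π M₂) {r : ℝ}
    (hG : ∀ e, π e < r → (e ∈ G₁.edgeSet ↔ e ∈ G₂.edgeSet)) (e : Sym2 V) (he : π e < r) :
    e ∈ M₁ ↔ e ∈ M₂ := by
  have wf := Finite.wellFounded_of_trans_of_irrefl (InvImage (· < ·) π)
  induction e using wf.induction with
  | _ e ih =>
  rw [hM₁ e, hM₂ e, hG e he]
  refine and_congr_right fun _ => forall_congr' fun d => ?_
  by_cases hd : π d < π e
  · simp only [hG d (hd.trans he), ih d hd (hd.trans he)]
  · simp [hd]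

lemma ncard_symmDiff_insert_le_of_mem_of_notMem (hM₁ : IsGreedyMatching G₁ π M₁)
    (hM₂ : IsGreedyMatching G₂ π M₂) {t : Set (Sym2 V)} {a : Sym2 V} (ha₁ : a ∈ M₁)
    (ha₂ : a ∉ M₂) (haG₂ : a ∈ G₂.edgeSet) (hclosed : ∀ d, π d < π a → d ∈ t)
    (hbelow : ∀ d ∈ M₁ ∩ t, π d < π a)
    (ih : ((⋃ e ∈ M₁ ∩ t, (e : Set V)) ∆ ⋃ e ∈ M₂ ∩ t, (e : Set V)).ncard ≤ 2) :
    ((⋃ e ∈ M₁ ∩ insert a t, (e : Set V)) ∆ ⋃ e ∈ M₂ ∩ insert a t, (e : Set V)).ncard ≤ 2 := by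
  rw [Set.inter_insert_of_mem ha₁, Set.inter_insert_of_notMem ha₂, Set.biUnion_insert]
  obtain ⟨d, hd₂, hlt, v, hva, hvd⟩ := hM₂.exists_lt_of_notMem haG₂ ha₂
  refine (Set.ncard_union_symmDiff_le_of_mem a.ncard_coe_le_two hva ?_ ?_).trans ih
  · simp only [Set.mem_iUnion₂, SetLike.mem_coe, not_exists]
    exact fun d' hd' hvd' => hM₁.notMem_of_lt ha₁ hva hvd' (hbelow d' hd') hd'.1
  · exact Set.mem_iUnion₂.2 ⟨d, ⟨hd₂, hclosed d hlt⟩, hvd⟩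

lemma ncard_symmDiff_insert_le_two {e₀ : Sym2 V} (hG₂ : G₂.edgeSet = insert e₀ G₁.edgeSet)
    (hM₁ : IsGreedyMatching G₁ π M₁) (hM₂ : IsGreedyMatching G₂ π M₂) {t : Set (Sym2 V)}
    {a : Sym2 V} (hclosed : ∀ d, π d < π a → d ∈ t)
    (hbelow : a ∈ M₁ ∪ M₂ → ∀ d ∈ (M₁ ∪ M₂) ∩ t, π d < π a)
    (ih : ((⋃ e ∈ M₁ ∩ t, (e : Set V)) ∆ ⋃ e ∈ M₂ ∩ t, (e : Set V)).ncard ≤ 2) :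
    ((⋃ e ∈ M₁ ∩ insert a t, (e : Set V)) ∆ ⋃ e ∈ M₂ ∩ insert a t, (e : Set V)).ncard ≤ 2 := by
  have hG₁₂ : G₁.edgeSet ⊆ G₂.edgeSet := hG₂ ▸ Set.subset_insert e₀ G₁.edgeSet
  by_cases ha₁ : a ∈ M₁ <;> by_cases ha₂ : a ∈ M₂
  · rw [Set.inter_insert_of_mem ha₁, Set.inter_insert_of_mem ha₂, Set.biUnion_insert,
      Set.biUnion_insert]
    refine (Set.ncard_le_ncard ?_).trans ih
    simpa using Set.union_symmDiff_union_subset (s := (a : Set V)) (u := (a : Set V))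
  · exact ncard_symmDiff_insert_le_of_mem_of_notMem hM₁ hM₂ ha₁ ha₂
      (hG₁₂ (hM₁.subset_edgeSet ha₁)) hclosed
      (fun d hd => hbelow (Or.inl ha₁) d ⟨Or.inl hd.1, hd.2⟩) ih
  · by_cases haG₁ : a ∈ G₁.edgeSet
    · rw [symmDiff_comm] at ih ⊢
      exact ncard_symmDiff_insert_le_of_mem_of_notMem hM₂ hM₁ ha₂ ha₁ haG₁ hclosed
        (fun d hd => hbelow (Or.inr ha₂) d ⟨Or.inr hd.1, hd.2⟩) ih
    · have hae₀ : a = e₀ := by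
        simpa [hG₂, haG₁] using hM₂.subset_edgeSet ha₂
      have hagree : M₁ ∩ t = M₂ ∩ t := by
        have hG : ∀ d, π d < π e₀ → (d ∈ G₁.edgeSet ↔ d ∈ G₂.edgeSet) := fun d hd => by
          rw [hG₂, Set.mem_insert_iff, or_iff_right (ne_of_apply_ne π hd.ne)]
        refine Set.ext fun d => and_congr_left fun hdt => ?_
        by_cases hd : d ∈ M₁ ∪ M₂
        · exact hM₁.mem_iff_mem_of_lt hM₂ hG d (hae₀ ▸ hbelow (Or.inr ha₂) d ⟨hd, hdt⟩)
        · exact iff_of_false (fun h => hd (Or.inl h)) (fun h => hd (Or.inr h))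
      rw [Set.inter_insert_of_notMem ha₁, Set.inter_insert_of_mem ha₂, Set.biUnion_insert,
        hagree, symmDiff_of_le Set.subset_union_right, Set.union_sdiff_right]
      exact (Set.ncard_le_ncard Set.sdiff_subset).trans a.ncard_coe_le_two
  · rw [Set.inter_insert_of_notMem ha₁, Set.inter_insert_of_notMem ha₂]
    exact ih

theorem ncard_symmDiff_le_two {e₀ : Sym2 V}
    (hπ : ∀ e₁ e₂ : Sym2 V, ¬e₁.IsDiag → ¬e₂.IsDiag → π e₁ = π e₂ → e₁ = e₂)
    (hG₂ : G₂.edgeSet = insert e₀ G₁.edgeSet) (hM₁ : IsGreedyMatching G₁ π M₁)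
    (hM₂ : IsGreedyMatching G₂ π M₂) :
    ((⋃ e ∈ M₁, (e : Set V)) ∆ ⋃ e ∈ M₂, (e : Set V)).ncard ≤ 2 := by
  classical
  have := Fintype.ofFinite V
  have hdiag : ∀ e ∈ M₁ ∪ M₂, ¬e.IsDiag := by
    rintro e (he | he)
    · exact G₁.not_isDiag_of_mem_edgeSet (hM₁.subset_edgeSet he)
    · exact G₂.not_isDiag_of_mem_edgeSet (hM₂.subset_edgeSet he)
  suffices h : ∀ t : Finset (Sym2 V), (∀ e ∈ t, ∀ d, π d < π e → d ∈ t) →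
      ((⋃ e ∈ M₁ ∩ t, (e : Set V)) ∆ ⋃ e ∈ M₂ ∩ t, (e : Set V)).ncard ≤ 2 by
    simpa using h Finset.univ (by simp)
  intro t
  induction t using Finset.induction_on_max_value π with
  | empty => simp
  | insert a t hat hmax ih =>
    intro hdown
    have hclosed : ∀ d, π d < π a → d ∈ t := fun d hd =>
      (Finset.mem_insert.1 (hdown a (t.mem_insert_self a) d hd)).resolve_left
        (ne_of_apply_ne π hd.ne)
    have hbelow : a ∈ M₁ ∪ M₂ → ∀ d ∈ (M₁ ∪ M₂) ∩ t, π d < π a := fun ha d ⟨hd, hdt⟩ =>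
      (hmax d hdt).lt_of_ne fun h => hat (hπ d a (hdiag d hd) (hdiag a ha) h ▸ hdt)
    have hdown_t : ∀ e ∈ t, ∀ d, π d < π e → d ∈ t := fun e he d hd =>
      (Finset.mem_insert.1 (hdown e (Finset.mem_insert_of_mem he) d hd)).resolve_left
        fun h => (hd.trans_le (hmax e he)).ne (congrArg π h)
    rw [Finset.coe_insert]
    exact ncard_symmDiff_insert_le_two hG₂ hM₁ hM₂ hclosed hbelow (ih hdown_t)

end IsGreedyMatching

theorem matching_estimator_coupled_sensitivity_general {V : Type*} [Fintype V] [DecidableEq V]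
    (n : ℕ) (hn : Fintype.card V = n)
    (G₁ G₂ : SimpleGraph V) (a b : V) (hab : a ≠ b)
    (hG₂ : G₂.edgeSet = insert s(a, b) G₁.edgeSet)
    (π : Sym2 V → ℝ)
    (hπ : ∀ e₁ e₂ : Sym2 V, ¬e₁.IsDiag → ¬e₂.IsDiag → π e₁ = π e₂ → e₁ = e₂)
    (M₁ M₂ : Set (Sym2 V))
    (hM₁ : IsGreedyMatching G₁ π M₁) (hM₂ : IsGreedyMatching G₂ π M₂)
    (S₁ S₂ : Finset V)
    (hS₁ : ∀ v : V, v ∈ S₁ ↔ ∃ e ∈ M₁, v ∈ e)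
    (hS₂ : ∀ v : V, v ∈ S₂ ↔ ∃ e ∈ M₂, v ∈ e)
    (s : ℕ) :
    ∃ f : V ≃ V,
      (∀ T : Finset V, T.card = s →
        |((n : ℝ) / (2 * s)) * ((T ∩ S₁).card : ℝ) -
            ((n : ℝ) / (2 * s)) * ((T.image f ∩ S₂).card : ℝ)| ≤ (n : ℝ) / s) ∧
      ∀ ρ : ℝ, 0 < ρ → 16 * 24 * Real.log n / ρ ^ 2 ≤ (s : ℝ) →
        (n : ℝ) / s ≤ (n : ℝ) * ρ ^ 2 / (16 * 24 * Real.log n) := by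
  have hS : (S₁ ∆ S₂).card ≤ 2 := by
    have hcover : ∀ (S : Finset V) (M : Set (Sym2 V)), (∀ v, v ∈ S ↔ ∃ e ∈ M, v ∈ e) →
        (S : Set V) = ⋃ e ∈ M, (e : Set V) := fun S M hS => by ext v; simp [hS]
    rw [← Set.ncard_coe_finset, Finset.coe_symmDiff, hcover S₁ M₁ hS₁, hcover S₂ M₂ hS₂]
    exact IsGreedyMatching.ncard_symmDiff_le_two hπ hG₂ hM₁ hM₂
  refine ⟨Equiv.refl V, fun T _ => ?_, fun ρ hρ hs => ?_⟩
  · have h₁₂ := T.card_inter_le_card_inter_add_card_symmDiff S₁ S₂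
    have h₂₁ := T.card_inter_le_card_inter_add_card_symmDiff S₂ S₁
    rw [symmDiff_comm] at h₂₁
    have hdiff : |((T ∩ S₁).card : ℝ) - (T ∩ S₂).card| ≤ 2 := by
      rw [abs_sub_le_iff, sub_le_iff_le_add, sub_le_iff_le_add]
      constructor <;> exact_mod_cast (by omega)
    calc _ = (n : ℝ) / (2 * s) * |((T ∩ S₁).card : ℝ) - (T ∩ S₂).card| := by
          rw [Equiv.coe_refl, Finset.image_id, ← mul_sub, abs_mul, abs_of_nonneg (by positivity)]
      _ ≤ (n : ℝ) / (2 * s) * 2 := by gcongr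
      _ = (n : ℝ) / s := by rw [div_mul_eq_mul_div, mul_comm, mul_div_mul_left _ _ two_ne_zero]
  · have hn1 : 1 < n := hn ▸ Fintype.one_lt_card_iff_nontrivial.2 ⟨a, b, hab⟩
    have hlog : 0 < Real.log n := Real.log_pos (by exact_mod_cast hn1)
    calc (n : ℝ) / s ≤ n / (16 * 24 * Real.log n / ρ ^ 2) :=
          div_le_div_of_nonneg_left (by positivity) (by positivity) hs
      _ = _ := div_div_eq_mul_div _ _ _

/-- Coupled global sensitivity of the sublinear-time maximum matching estimator:
if `G₂` is `G₁` plus one edge `e* = s(a,b)` and `S₁, S₂` are the matched vertex sets of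
the greedy matchings with respect to an injective ranking `π`, then for every sample
size `1 ≤ s ≤ n` there is a bijection `f` of the vertices such that for every sample
`T` of `s` vertices the matching-size estimators `(n/(2s))·|T ∩ S₁|` and
`(n/(2s))·|f(T) ∩ S₂|` differ by at most `n/s`; moreover if
`s ≥ 16·24·(ln n)/ρ²` then `n/s ≤ n·ρ²/(16·24·ln n)`. -/
theorem matching_estimator_coupled_sensitivity {V : Type*} [Fintype V] [DecidableEq V]
    (n : ℕ) (hn : Fintype.card V = n)
    (G₁ G₂ : SimpleGraph V) (a b : V) (hab : a ≠ b)
    (hne : s(a, b) ∉ G₁.edgeSet)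
    (hG₂ : G₂.edgeSet = insert s(a, b) G₁.edgeSet)
    (π : Sym2 V → ℝ)
    (hπ : ∀ e₁ e₂ : Sym2 V, ¬e₁.IsDiag → ¬e₂.IsDiag → π e₁ = π e₂ → e₁ = e₂)
    (M₁ M₂ : Set (Sym2 V))
    (hM₁ : IsGreedyMatching G₁ π M₁) (hM₂ : IsGreedyMatching G₂ π M₂)
    (S₁ S₂ : Finset V)
    (hS₁ : ∀ v : V, v ∈ S₁ ↔ ∃ e ∈ M₁, v ∈ e)
    (hS₂ : ∀ v : V, v ∈ S₂ ↔ ∃ e ∈ M₂, v ∈ e)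
    (s : ℕ) (hs : 1 ≤ s) (hsn : s ≤ n) :
    ∃ f : V ≃ V,
      (∀ T : Finset V, T.card = s →
        |((n : ℝ) / (2 * s)) * ((T ∩ S₁).card : ℝ) -
            ((n : ℝ) / (2 * s)) * ((T.image f ∩ S₂).card : ℝ)| ≤ (n : ℝ) / s) ∧
      ∀ ρ : ℝ, 0 < ρ → 16 * 24 * Real.log n / ρ ^ 2 ≤ (s : ℝ) →
        (n : ℝ) / s ≤ (n : ℝ) * ρ ^ 2 / (16 * 24 * Real.log n) :=
  matching_estimator_coupled_sensitivity_general n hn G₁ G₂ a b hab hG₂ π hπ M₁ M₂ hM₁ hM₂ S₁ S₂ hS₁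
    hS₂ s
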